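/- In the hyperoctahedron face module, for disjoint subsets a, b of the positive vertex set with |a| + |b| = k and |b| = j, the element [a,b] = ∏_{α∈a}(α + ᾱ)·∏_{β∈b}(β − β̄) is an eigenvector of σ_k with eigenvalue k − 2j. -/

import Mathlib

/-!
Write `[a,b] = ∑_{s ⊆ a ∪ b} (-1)^{|s ∩ b|} F_s`, where `F_s` is the face over `a ∪ b` that takes
the barred vertex exactly over `s`. Flipping one vertex of `F_s` gives `F_{s ∆ {i}}`, so
`σ F_s = ∑_{i ∈ a ∪ b} F_{s ∆ {i}}`. Reindexing each inner sum by the involution `s ↦ s ∆ {i}`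
multiplies the sign by `-1` exactly when `i ∈ b`, hence `σ [a,b] = (|a| - |b|) [a,b]`.
-/

open Finset

/-- The opposite vertex: `(i, true) = αᵢ ↔ (i, false) = ᾱᵢ`. -/
def oppv {n : ℕ} (p : Fin n × Bool) : Fin n × Bool := (p.1, !p.2)

/-- The flip map `σ(x) = Σ_{γ ∈ x} ((x \ γ) ∪ {γ̄})` on the module of formal
`F`-linear combinations of subsets of the vertex set. -/
noncomputable def sigmaMap (F : Type*) [CommRing F] (n : ℕ) :
    (Finset (Fin n × Bool) →₀ F) →ₗ[F] (Finset (Fin n × Bool) →₀ F) :=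
  Finsupp.lsum F fun x => LinearMap.toSpanSingleton F _
    (∑ γ ∈ x, Finsupp.single (insert (oppv γ) (x.erase γ)) (1 : F))

/-- The element `[a,b] = ∏_{α ∈ a} (α + ᾱ) · ∏_{β ∈ b} (β - β̄)`, expanded as a
signed sum of faces: the sum runs over the sets `u ⊆ a`, `v ⊆ b` of indices where
the barred vertex is chosen, with sign `(-1)^{|v|}`. -/
noncomputable def elt (F : Type*) [CommRing F] {n : ℕ} (a b : Finset (Fin n)) :
    Finset (Fin n × Bool) →₀ F :=
  ∑ u ∈ a.powerset, ∑ v ∈ b.powerset,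
    ((-1 : F) ^ v.card) •
      Finsupp.single
        ((((a ∪ b) \ (u ∪ v)).image fun i => (i, true)) ∪
          ((u ∪ v).image fun i => (i, false))) (1 : F)

open scoped symmDiff

section Faces

variable {ι : Type*} [DecidableEq ι]

def face (t s : Finset ι) : Finset (ι × Bool) :=
  t.image fun i => (i, decide (i ∉ s))

lemma face_eq_union_of_subset {t s : Finset ι} (h : s ⊆ t) :
    face t s = ((t \ s).image fun i => (i, true)) ∪ (s.image fun i => (i, false)) := by
  ext ⟨i, c⟩
  cases c
  · simpa [face] using @h i
  · simp [face, and_comm]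

lemma union_inter_right_of_disjoint {a b u v : Finset ι} (h : Disjoint a b) (hu : u ⊆ a)
    (hv : v ⊆ b) :
    (u ∪ v) ∩ b = v := by
  rw [union_inter_distrib_right, disjoint_iff_inter_eq_empty.1 (h.mono_left hu), empty_union,
    inter_eq_left.2 hv]

lemma sum_powerset_union_of_disjoint {M : Type*} [AddCommMonoid M] {a b : Finset ι}
    (h : Disjoint a b) (f : Finset ι → M) :
    ∑ u ∈ a.powerset, ∑ v ∈ b.powerset, f (u ∪ v) = ∑ s ∈ (a ∪ b).powerset, f s := by
  rw [← sum_product']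
  refine sum_nbij' (fun p => p.1 ∪ p.2) (fun s => (s ∩ a, s ∩ b)) ?_ ?_ ?_ ?_ fun _ _ => rfl
  all_goals intro p hp; simp only [mem_product, mem_powerset] at hp ⊢
  · exact union_subset_union hp.1 hp.2
  · exact ⟨inter_subset_right, inter_subset_right⟩
  · rw [union_inter_right_of_disjoint h hp.1 hp.2, union_comm,
      union_inter_right_of_disjoint h.symm hp.2 hp.1]
  · rw [← inter_union_distrib_left, inter_eq_left.2 hp]

lemma sum_powerset_symmDiff_singleton {M : Type*} [AddCommMonoid M] {t : Finset ι} {i : ι}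
    (hi : i ∈ t) (f : Finset ι → M) :
    ∑ s ∈ t.powerset, f (s ∆ {i}) = ∑ s ∈ t.powerset, f s := by
  have hmaps : ∀ s ∈ t.powerset, s ∆ {i} ∈ t.powerset := fun s hs =>
    mem_powerset.2 <| symmDiff_subset_union.trans <| union_subset (mem_powerset.1 hs) <|
      singleton_subset_iff.2 hi
  exact sum_nbij' (· ∆ {i}) (· ∆ {i}) hmaps hmaps (fun _ _ => symmDiff_symmDiff_cancel_right _ _)
    (fun _ _ => symmDiff_symmDiff_cancel_right _ _) fun _ _ => rfl

lemma neg_one_pow_card_symmDiff_singleton {R : Type*} [Ring R] (u : Finset ι) (i : ι) :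
    (-1 : R) ^ #(u ∆ {i}) = -(-1) ^ #u := by
  by_cases hi : i ∈ u
  · have : u ∆ {i} = u.erase i := by ext j; by_cases j = i <;> simp_all [mem_symmDiff]
    rw [this, ← card_erase_add_one hi, pow_succ, mul_neg_one, neg_neg]
  · have : u ∆ {i} = insert i u := by ext j; by_cases j = i <;> simp_all [mem_symmDiff]
    rw [this, card_insert_of_notMem hi, pow_succ, mul_neg_one]

lemma neg_one_pow_card_symmDiff_singleton_inter {R : Type*} [Ring R] (s b : Finset ι) (i : ι) :
    (-1 : R) ^ #((s ∆ {i}) ∩ b) = (if i ∈ b then -1 else 1) * (-1) ^ #(s ∩ b) := by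
  by_cases hib : i ∈ b
  · have : (s ∆ {i}) ∩ b = (s ∩ b) ∆ {i} := by
      ext j; by_cases j = i <;> simp_all [mem_symmDiff]
    rw [this, neg_one_pow_card_symmDiff_singleton, if_pos hib, neg_one_mul]
  · have : (s ∆ {i}) ∩ b = s ∩ b := by
      ext j; by_cases j = i <;> simp_all [mem_symmDiff]
    rw [this, if_neg hib, one_mul]

lemma sum_ite_mem_union_of_disjoint {R : Type*} [Ring R] {a b : Finset ι}
    (h : Disjoint a b) :
    ∑ i ∈ a ∪ b, (if i ∈ b then (-1 : R) else 1) = #a - #b := by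
  rw [sum_union h, sum_congr rfl fun i hi => if_neg (disjoint_left.1 h hi),
    sum_congr rfl fun i hi => if_pos hi]
  simp [sub_eq_add_neg]

end Faces

section Flip

variable {n : ℕ}

lemma insert_oppv_erase_face {t s : Finset (Fin n)} {i : Fin n} (hi : i ∈ t) :
    insert (oppv (i, decide (i ∉ s))) ((face t s).erase (i, decide (i ∉ s))) =
      face t (s ∆ {i}) := by
  ext ⟨j, c⟩
  by_cases j = i <;> cases c <;> simp_all [face, oppv, mem_symmDiff]

lemma sigmaMap_single_face (F : Type*) [CommRing F] (t s : Finset (Fin n)) :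
    sigmaMap F n (Finsupp.single (face t s) 1) =
      ∑ i ∈ t, Finsupp.single (face t (s ∆ {i})) 1 := by
  rw [sigmaMap, Finsupp.lsum_single, LinearMap.toSpanSingleton_apply, one_smul, face,
    sum_image fun _ _ _ _ h => (Prod.ext_iff.1 h).1]
  exact sum_congr rfl fun i hi => by rw [← face, insert_oppv_erase_face hi]

lemma elt_eq_sum_face (F : Type*) [CommRing F] {a b : Finset (Fin n)} (h : Disjoint a b) :
    elt F a b = ∑ s ∈ (a ∪ b).powerset,
      ((-1 : F) ^ #(s ∩ b)) • Finsupp.single (face (a ∪ b) s) 1 := by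
  rw [elt, ← sum_powerset_union_of_disjoint h]
  refine sum_congr rfl fun u hu => sum_congr rfl fun v hv => ?_
  rw [mem_powerset] at hu hv
  rw [union_inter_right_of_disjoint h hu hv,
    face_eq_union_of_subset (union_subset_union hu hv)]

end Flip

theorem stmt_10 {F : Type*} [CommRing F] (n k j : ℕ) (a b : Finset (Fin n))
    (hab : Disjoint a b) (hk : a.card + b.card = k) (hj : b.card = j) :
    sigmaMap F n (elt F a b) = ((k : F) - 2 * (j : F)) • elt F a b := by
  subst hk hj
  have helt := elt_eq_sum_face F hab
  calc sigmaMap F n (elt F a b)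
      = ∑ s ∈ (a ∪ b).powerset, ∑ i ∈ a ∪ b,
          ((-1 : F) ^ #(s ∩ b)) • Finsupp.single (face (a ∪ b) (s ∆ {i})) 1 := by
        simp only [helt, map_sum, map_smul, sigmaMap_single_face, smul_sum]
    _ = ∑ i ∈ a ∪ b, ∑ s ∈ (a ∪ b).powerset,
          ((-1 : F) ^ #((s ∆ {i}) ∩ b)) • Finsupp.single (face (a ∪ b) s) 1 := by
        rw [sum_comm]
        refine sum_congr rfl fun i hi => ?_
        rw [← sum_powerset_symmDiff_singleton hi]
        simp only [symmDiff_symmDiff_cancel_right]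
    _ = ∑ i ∈ a ∪ b, (if i ∈ b then (-1 : F) else 1) • elt F a b := by
        simp only [helt, neg_one_pow_card_symmDiff_singleton_inter, mul_smul, smul_sum]
    _ = ((#a + #b : ℕ) - 2 * (#b : F)) • elt F a b := by
        rw [← sum_smul, sum_ite_mem_union_of_disjoint hab]
        congr 1
        push_cast
        ring
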